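/- arXiv:2509.12195 — 2 statements merged into one kernel-verified Lean document; each statement's English description precedes it below -/
import Mathlib

section
/- Fix reals $\gamma>0$, $\delta>0$ with $\delta<\gamma$, and $\psi,\beta,R>0$. For each $w>0$ let $c(w)\in(0,w)$ be the unique solution of $c^{-\gamma}=\beta R\big((R(w-c))^{-\gamma}+\psi(R(w-c))^{-\delta}\big)$. Then $c(w)\le(\psi\beta R^{1-\delta})^{-1/\gamma}w^{\delta/\gamma}$ for all $w>0$, and consequently $\lim_{w\to\infty}c(w)/w=0$. -/
open Real Filter

/-- Two-period model with `δ < γ`: the consumption function satisfies the power bound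
`c(w) ≤ (ψ β R^(1-δ))^(-1/γ) w^(δ/γ)` and hence `c(w)/w → 0` as `w → ∞`. -/
theorem stmt4 (γ δ ψ β R : ℝ) (hγ : 0 < γ) (hδ : 0 < δ) (hδγ : δ < γ)
    (hψ : 0 < ψ) (hβ : 0 < β) (hR : 0 < R) (c : ℝ → ℝ)
    (hc : ∀ w > (0 : ℝ), c w ∈ Set.Ioo 0 w ∧
      (c w) ^ (-γ) = β * R * ((R * (w - c w)) ^ (-γ) + ψ * (R * (w - c w)) ^ (-δ))) :
    (∀ w > (0 : ℝ), c w ≤ (ψ * β * R ^ (1 - δ)) ^ (-(1 / γ)) * w ^ (δ / γ)) ∧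
    Filter.Tendsto (fun w => c w / w) Filter.atTop (nhds 0) := by
  set K := ψ * β * R ^ (1 - δ) with hK
  have hKpos : 0 < K := by positivity
  have key : ∀ w > (0 : ℝ), c w ≤ K ^ (-(1 / γ)) * w ^ (δ / γ) := by
    intro w hw
    obtain ⟨⟨hc0, hcw⟩, hfoc⟩ := hc w hw
    have hwc : 0 < w - c w := by linarith
    have hRwc : 0 < R * (w - c w) := by positivity
    -- c^{-γ} ≥ K * w^{-δ}
    have h1 : K * w ^ (-δ) ≤ (c w) ^ (-γ) := by
      have h2 : (R * w) ^ (-δ) ≤ (R * (w - c w)) ^ (-δ) :=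
        rpow_le_rpow_of_nonpos hRwc (by nlinarith) (by linarith)
      have h3 : β * R * (ψ * (R * w) ^ (-δ)) ≤ (c w) ^ (-γ) := by
        rw [hfoc]
        have : (0:ℝ) ≤ (R * (w - c w)) ^ (-γ) := (rpow_pos_of_pos hRwc _).le
        have h2' := mul_le_mul_of_nonneg_left h2 hψ.le
        nlinarith [mul_pos hβ hR]
      calc K * w ^ (-δ) = β * R * (ψ * (R * w) ^ (-δ)) := by
            rw [mul_rpow hR.le hw.le, hK, show (1-δ) = 1 + (-δ) by ring,
              rpow_add hR, rpow_one]
            ring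
        _ ≤ _ := h3
    -- apply x ↦ x^{-1/γ}
    have h4 : ((c w) ^ (-γ)) ^ (-(1/γ)) ≤ (K * w ^ (-δ)) ^ (-(1/γ)) :=
      rpow_le_rpow_of_nonpos (by positivity) h1 (by positivity |> neg_nonpos_of_nonneg)
    have hl : ((c w) ^ (-γ)) ^ (-(1/γ)) = c w := by
      rw [← rpow_mul hc0.le]
      rw [show (-γ) * (-(1/γ)) = 1 by field_simp]
      exact rpow_one _
    have hrr : (K * w ^ (-δ)) ^ (-(1/γ)) = K ^ (-(1/γ)) * w ^ (δ / γ) := by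
      rw [mul_rpow hKpos.le (rpow_pos_of_pos hw _).le, ← rpow_mul hw.le]
      congr 1
      field_simp
    rw [hl, hrr] at h4
    exact h4
  refine ⟨key, ?_⟩
  have hlim : Tendsto (fun w : ℝ => K ^ (-(1/γ)) * w ^ (δ/γ - 1)) atTop (nhds 0) := by
    have := (tendsto_rpow_neg_atTop (y := 1 - δ/γ) (by
      have : δ/γ < 1 := (div_lt_one hγ).2 hδγ
      linarith)).const_mul (K ^ (-(1/γ)))
    simpa [mul_zero, neg_sub] using this
  apply squeeze_zero' (g := fun w : ℝ => K ^ (-(1/γ)) * w ^ (δ/γ - 1))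
  · filter_upwards [eventually_gt_atTop 0] with w hw
    exact div_nonneg (hc w hw).1.1.le hw.le
  · filter_upwards [eventually_gt_atTop 0] with w hw
    have := key w hw
    rw [div_le_iff₀ hw]
    calc c w ≤ K ^ (-(1/γ)) * w ^ (δ / γ) := this
      _ = K ^ (-(1/γ)) * w ^ (δ/γ - 1) * w := by
          rw [mul_assoc, ← rpow_add_one hw.ne' (δ/γ - 1)]; ring_nf
  · exact hlim
end

section
/- Fix reals $\gamma>0$, $\delta>\gamma$, and $\psi,\beta,R>0$. For each $w>0$ let $c(w)\in(0,w)$ be the unique solution of $c^{-\gamma}=\beta R\big((R(w-c))^{-\gamma}+\psi(R(w-c))^{-\delta}\big)$. Then $\lim_{w\to\infty}c(w)/w=\bar c_2$ where $\bar c_2=1/(1+(\beta R^{1-\gamma})^{1/\gamma})$. -/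
open Filter Real

/-- Two-period model with `δ > γ`: the consumption-wealth ratio converges to
`c̄₂ = 1/(1 + (β R^(1-γ))^(1/γ))` as wealth tends to infinity. -/
theorem stmt5 (γ δ ψ β R : ℝ) (hγ : 0 < γ) (hδγ : γ < δ)
    (hψ : 0 < ψ) (hβ : 0 < β) (hR : 0 < R) (c : ℝ → ℝ)
    (hc : ∀ w > (0 : ℝ), c w ∈ Set.Ioo 0 w ∧
      (c w) ^ (-γ) = β * R * ((R * (w - c w)) ^ (-γ) + ψ * (R * (w - c w)) ^ (-δ))) :
    Filter.Tendsto (fun w => c w / w) Filter.atTop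
      (nhds (1 / (1 + (β * R ^ (1 - γ)) ^ (1 / γ)))) := by
  have hγ0 : γ ≠ 0 := ne_of_gt hγ
  set k := (β * R ^ (1 - γ)) ^ (1 / γ) with hk
  have hBR : 0 < β * R ^ (1 - γ) := by positivity
  have hkpos : 0 < k := Real.rpow_pos_of_pos hBR _
  set ε : ℝ → ℝ := fun w => ψ * (R * (w - c w)) ^ (γ - δ) with hεdef
  -- key per-w facts
  have key : ∀ w > (0:ℝ), 0 < c w ∧ c w < w ∧
      (w - c w) / c w = k * (1 + ε w) ^ (1 / γ) := by
    intro w hw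
    obtain ⟨⟨hc0, hcw⟩, heq⟩ := hc w hw
    refine ⟨hc0, hcw, ?_⟩
    have hwc : 0 < w - c w := sub_pos.2 hcw
    have ha : 0 < R * (w - c w) := mul_pos hR hwc
    have hεpos : 0 < ε w := mul_pos hψ (Real.rpow_pos_of_pos ha _)
    have h1 : (R * (w - c w)) ^ (-δ) = (R * (w - c w)) ^ (-γ) * (R * (w - c w)) ^ (γ - δ) := by
      rw [← Real.rpow_add ha]; ring_nf
    have h2 : (c w) ^ (-γ) = β * R * ((R * (w - c w)) ^ (-γ) * (1 + ε w)) := by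
      rw [heq, h1, hεdef]; ring
    have haR : (R * (w - c w)) ^ (-γ) = R ^ (-γ) * (w - c w) ^ (-γ) :=
      Real.mul_rpow hR.le hwc.le
    have hx1 : (w - c w) ^ γ * (w - c w) ^ (-γ) = 1 := by
      rw [← Real.rpow_add hwc]; simp
    have hR1 : R ^ ((1:ℝ) - γ) = R * R ^ (-γ) := by
      rw [sub_eq_add_neg, Real.rpow_add hR, Real.rpow_one]
    have hgoal : ((w - c w) / c w) ^ γ = (w - c w) ^ γ * (c w) ^ (-γ) := by
      rw [Real.rpow_neg hc0.le, Real.div_rpow hwc.le hc0.le, div_eq_mul_inv]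
    have h3 : ((w - c w) / c w) ^ γ = β * R ^ ((1:ℝ) - γ) * (1 + ε w) := by
      rw [hgoal, h2, haR, hR1]
      linear_combination (β * R * R ^ (-γ) * (1 + ε w)) * hx1
    have h4 : (w - c w) / c w = (β * R ^ ((1:ℝ) - γ) * (1 + ε w)) ^ (1 / γ) := by
      rw [← h3, ← Real.rpow_mul (div_nonneg hwc.le hc0.le), mul_one_div, div_self hγ0,
        Real.rpow_one]
    rw [h4, Real.mul_rpow hBR.le (by positivity)]
  -- lower bound on w - c w
  have hub : ∀ w > (0:ℝ), w * (k / (1 + k)) ≤ w - c w := by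
    intro w hw
    obtain ⟨hc0, hcw, hf⟩ := key w hw
    have hwc : 0 < w - c w := sub_pos.2 hcw
    have hεpos : 0 < ε w := mul_pos hψ (Real.rpow_pos_of_pos (mul_pos hR hwc) _)
    have h1le : (1:ℝ) ≤ (1 + ε w) ^ (1 / γ) :=
      Real.one_le_rpow (by linarith) (by positivity)
    have hkle : k ≤ (w - c w) / c w := by
      rw [hf]; nlinarith
    have h5 : k * c w ≤ w - c w := (le_div_iff₀ hc0).mp hkle
    rw [← mul_div_assoc, div_le_iff₀ (by linarith : (0:ℝ) < 1 + k)]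
    nlinarith
  -- ε tends to 0
  have hεto : Tendsto ε atTop (nhds 0) := by
    have hg : Tendsto (fun w : ℝ => ψ * (R * (w * (k / (1 + k)))) ^ (γ - δ)) atTop (nhds 0) := by
      have hslope : 0 < k / (1 + k) := by positivity
      have h1 : Tendsto (fun w : ℝ => R * (w * (k / (1 + k)))) atTop atTop := by
        apply Tendsto.const_mul_atTop hR
        exact Tendsto.atTop_mul_const hslope tendsto_id
      have h2 : Tendsto (fun x : ℝ => x ^ (γ - δ)) atTop (nhds 0) := by
        have := tendsto_rpow_neg_atTop (y := δ - γ) (by linarith)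
        simpa [neg_sub] using this
      have h3 := (h2.comp h1).const_mul ψ
      simpa using h3
    apply tendsto_of_tendsto_of_tendsto_of_le_of_le' tendsto_const_nhds hg
    · filter_upwards [eventually_gt_atTop (0:ℝ)] with w hw
      obtain ⟨hc0, hcw, _⟩ := key w hw
      have hwc : 0 < w - c w := sub_pos.2 hcw
      simp only [hεdef]
      positivity
    · filter_upwards [eventually_gt_atTop (0:ℝ)] with w hw
      obtain ⟨hc0, hcw, _⟩ := key w hw
      have hwc : 0 < w - c w := sub_pos.2 hcw
      have hb := hub w hw
      have hbpos : 0 < w * (k / (1 + k)) := by positivity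
      have := Real.rpow_le_rpow_of_nonpos (mul_pos hR hbpos)
        (by nlinarith : R * (w * (k / (1 + k))) ≤ R * (w - c w)) (by linarith : γ - δ ≤ 0)
      exact mul_le_mul_of_nonneg_left this hψ.le
  -- ratio tends to k
  have hfk : Tendsto (fun w => (w - c w) / c w) atTop (nhds k) := by
    have h1 : Tendsto (fun w => k * (1 + ε w) ^ (1 / γ)) atTop (nhds k) := by
      have h2 : Tendsto (fun w => (1:ℝ) + ε w) atTop (nhds 1) := by
        simpa using hεto.const_add 1
      have h3 := h2.rpow_const (Or.inl one_ne_zero) (p := 1 / γ)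
      simpa using h3.const_mul k
    apply h1.congr'
    filter_upwards [eventually_gt_atTop (0:ℝ)] with w hw
    exact ((key w hw).2.2).symm
  -- conclude
  have hfin : Tendsto (fun w => 1 / (1 + (w - c w) / c w)) atTop (nhds (1 / (1 + k))) := by
    exact tendsto_const_nhds.div (tendsto_const_nhds.add hfk) (by positivity)
  apply hfin.congr'
  filter_upwards [eventually_gt_atTop (0:ℝ)] with w hw
  obtain ⟨hc0, hcw, _⟩ := key w hw
  have h6 : 1 + (w - c w) / c w = w / c w := by field_simp; ring
  rw [h6, one_div_div]
end
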